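/- Let Ξ = {0, 1, E, O, ⟨SEP⟩, ⟨EOS⟩}. For every w ∈ {0,1}* with n := #1(w), and for every proper prefix U of the trace string P₁ P₂ ⋯ P_{n+1} ⟨SEP⟩ P_{n+1} ⟨EOS⟩ (where P_k = E if k is odd and P_k = O if k is even), exactly one of the following four conditions holds for x := w · U: (a) Init(x), or (Flip(x) and x_last = O), or (x_last = ⟨SEP⟩ and x_prev = E); (b) (Flip(x) and x_last = E), or (x_last = ⟨SEP⟩ and x_prev = O); (c) EmitSEP(x); (d) EmitEOS(x). Hence exactly one OUTPUT clause of the PARITY program is active at every autoregressive step. -/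

import Mathlib

/-- The alphabet for the PARITY chain of thought:
input bits `0`, `1`, parity states `E` (even), `O` (odd), and the distinguished symbols
`⟨SEP⟩` and `⟨EOS⟩`. -/
inductive PTok : Type
  | zero : PTok
  | one : PTok
  | E : PTok
  | O : PTok
  | SEP : PTok
  | EOS : PTok
deriving DecidableEq

instance instFintypePTok : Fintype PTok where
  elems := {PTok.zero, PTok.one, PTok.E, PTok.O, PTok.SEP, PTok.EOS}
  complete := fun x => by cases x <;> simp

/-- `Generates M w U`: the next-token map `M` generates the string `U` on input `w`. -/
def Generates (M : List PTok → PTok) (w U : List PTok) : Prop :=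
  ∀ (k : ℕ) (h : k < U.length), M (w ++ U.take k) = U.get ⟨k, h⟩

/-- `C_par(x)`: the number of parity-state tokens (`E` or `O`) in `x`. -/
def countPar (x : List PTok) : ℕ := x.count PTok.E + x.count PTok.O

/-- Initial phase: no parity-state token and no separator generated yet. -/
def InitP (x : List PTok) : Prop := countPar x = 0 ∧ x.count PTok.SEP = 0

/-- Flipping phase: between `1` and `#1(x)` parity tokens produced, no separator yet. -/
def Flip (x : List PTok) : Prop :=
  1 ≤ countPar x ∧ countPar x ≤ x.count PTok.one ∧ x.count PTok.SEP = 0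

/-- Emit the separator: exactly `#1(x) + 1` parity tokens produced, no separator yet. -/
def EmitSEP (x : List PTok) : Prop :=
  countPar x = x.count PTok.one + 1 ∧ x.count PTok.SEP = 0

/-- Emit `⟨EOS⟩`: the last symbol is `E` or `O` and the second-to-last is `⟨SEP⟩`. -/
def EmitEOS (x : List PTok) : Prop :=
  (x.getLast? = some PTok.E ∨ x.getLast? = some PTok.O) ∧
    x.dropLast.getLast? = some PTok.SEP

instance : DecidablePred InitP := fun x => by unfold InitP; infer_instance
instance : DecidablePred Flip := fun x => by unfold Flip; infer_instance
instance : DecidablePred EmitSEP := fun x => by unfold EmitSEP; infer_instance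
instance : DecidablePred EmitEOS := fun x => by unfold EmitEOS; infer_instance

/-- The PARITY next-token map. -/
def parityM (x : List PTok) : PTok :=
  if InitP x ∨ (Flip x ∧ x.getLast? = some PTok.O) ∨
      (x.getLast? = some PTok.SEP ∧ x.dropLast.getLast? = some PTok.E) then PTok.E
  else if (Flip x ∧ x.getLast? = some PTok.E) ∨
      (x.getLast? = some PTok.SEP ∧ x.dropLast.getLast? = some PTok.O) then PTok.O
  else if EmitSEP x then PTok.SEP
  else if EmitEOS x then PTok.EOS
  else PTok.zero

/-- `P k`: the `k`-th parity-state token (1-indexed): `E` if `k` is odd, `O` if even. -/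
def parTok (k : ℕ) : PTok := if k % 2 = 1 then PTok.E else PTok.O

/-- The full PARITY chain-of-thought trace `P₁ P₂ ⋯ P_{n+1} ⟨SEP⟩ P_{n+1} ⟨EOS⟩` for an
input containing `n` ones. -/
def parityTrace (n : ℕ) : List PTok :=
  (List.range (n + 1)).map (fun i => parTok (i + 1)) ++
    [PTok.SEP, parTok (n + 1), PTok.EOS]

/-- Clause (a) of the PARITY program: output `E`. -/
def ClauseE (x : List PTok) : Prop :=
  InitP x ∨ (Flip x ∧ x.getLast? = some PTok.O) ∨
    (x.getLast? = some PTok.SEP ∧ x.dropLast.getLast? = some PTok.E)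

/-- Clause (b) of the PARITY program: output `O`. -/
def ClauseO (x : List PTok) : Prop :=
  (Flip x ∧ x.getLast? = some PTok.E) ∨
    (x.getLast? = some PTok.SEP ∧ x.dropLast.getLast? = some PTok.O)

/-! The four clauses are mutually exclusive on every string: `InitP`, `Flip` and `EmitSEP`
require `⟨SEP⟩ ∉ x` and are told apart by `C_par(x)` (zero, between `1` and `#1(x)`, `#1(x) + 1`),
while the remaining clauses need `⟨SEP⟩` among the last two symbols and are told apart by
those symbols. So it suffices that some clause holds along the trace, which is read off
phase by phase: with `k` parity states emitted, `x` is in `InitP` for `k = 0`, in `Flip` with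
last symbol `P_k` for `1 ≤ k ≤ n`, in `EmitSEP` for `k = n + 1`, then ends in `P_{n+1} ⟨SEP⟩`
and finally in `⟨SEP⟩ P_{n+1}`. -/

theorem exactlyOne_clause_of_or (x : List PTok)
    (h : ClauseE x ∨ ClauseO x ∨ EmitSEP x ∨ EmitEOS x) :
    (ClauseE x ∧ ¬ClauseO x ∧ ¬EmitSEP x ∧ ¬EmitEOS x) ∨
    (¬ClauseE x ∧ ClauseO x ∧ ¬EmitSEP x ∧ ¬EmitEOS x) ∨
    (¬ClauseE x ∧ ¬ClauseO x ∧ EmitSEP x ∧ ¬EmitEOS x) ∨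
    (¬ClauseE x ∧ ¬ClauseO x ∧ ¬EmitSEP x ∧ EmitEOS x) := by
  have hlast : x.getLast? = some PTok.SEP → 0 < x.count PTok.SEP := fun h =>
    List.count_pos_iff.mpr (List.mem_of_getLast? h)
  have hprev : x.dropLast.getLast? = some PTok.SEP → 0 < x.count PTok.SEP := fun h =>
    List.count_pos_iff.mpr (List.mem_of_mem_dropLast (List.mem_of_getLast? h))
  unfold ClauseE ClauseO EmitSEP EmitEOS InitP Flip at *
  generalize countPar x = c, x.count PTok.one = m, x.count PTok.SEP = s,
    x.getLast? = l, x.dropLast.getLast? = p at *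
  grind (splits := 40)

theorem parTok_eq_E_or_O (k : ℕ) : parTok k = PTok.E ∨ parTok k = PTok.O := by
  unfold parTok
  split <;> simp

def parStates (k : ℕ) : List PTok := (List.range k).map fun i => parTok (i + 1)

theorem parStates_succ (k : ℕ) : parStates (k + 1) = parStates k ++ [parTok (k + 1)] := by
  simp [parStates, List.range_succ]

theorem getLast?_append_parStates_succ (w : List PTok) (k : ℕ) :
    (w ++ parStates (k + 1)).getLast? = some (parTok (k + 1)) := by
  simp [parStates_succ]

theorem countPar_parStates (k : ℕ) : countPar (parStates k) = k := by
  induction k with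
  | zero => rfl
  | succ k ih =>
    simp only [countPar] at ih ⊢
    rcases parTok_eq_E_or_O (k + 1) with h | h <;>
      simp [parStates_succ, List.count_append, h] <;> omega

theorem count_parStates_eq_zero {a : PTok} (hE : a ≠ PTok.E) (hO : a ≠ PTok.O) (k : ℕ) :
    (parStates k).count a = 0 := by
  simp only [List.count_eq_zero, parStates, List.mem_map, not_exists, not_and]
  intro i _ h
  rcases parTok_eq_E_or_O (i + 1) with h' | h' <;> simp_all

theorem prefix_parStates {U : List PTok} {m : ℕ} (hU : U <+: parStates m) :
    ∃ k ≤ m, U = parStates k :=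
  ⟨min U.length m, min_le_right _ _, by
    conv_lhs => rw [List.prefix_iff_eq_take.mp hU]
    simp [parStates, ← List.map_take, List.take_range]⟩

theorem eq_of_prefix_parityTrace {U : List PTok} {n : ℕ} (hU : U <+: parityTrace n)
    (hproper : U ≠ parityTrace n) :
    (∃ k ≤ n + 1, U = parStates k) ∨ U = parStates (n + 1) ++ [PTok.SEP] ∨
      U = parStates (n + 1) ++ [PTok.SEP, parTok (n + 1)] := by
  have htrace : parityTrace n = parStates (n + 1) ++ [PTok.SEP] ++ [parTok (n + 1)] ++
      [PTok.EOS] := by simp [parityTrace, parStates]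
  rw [htrace] at hU hproper
  simp only [List.prefix_concat_iff, hproper, false_or] at hU
  rcases hU with h | h | h
  · simp [h]
  · simp [h]
  · exact Or.inl (prefix_parStates h)

theorem count_eq_zero_of_bits {w : List PTok} (hw : ∀ a ∈ w, a = PTok.zero ∨ a = PTok.one)
    {a : PTok} (h0 : a ≠ PTok.zero) (h1 : a ≠ PTok.one) : w.count a = 0 :=
  List.count_eq_zero.mpr fun ha => by rcases hw a ha with rfl | rfl <;> simp_all

theorem clause_of_append_parStates {w : List PTok}
    (hw : ∀ a ∈ w, a = PTok.zero ∨ a = PTok.one) {k : ℕ} (hk : k ≤ w.count PTok.one + 1) :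
    ClauseE (w ++ parStates k) ∨ ClauseO (w ++ parStates k) ∨ EmitSEP (w ++ parStates k) := by
  have hc : countPar (w ++ parStates k) = k := by
    have := countPar_parStates k
    simp only [countPar, List.count_append] at this ⊢
    rw [count_eq_zero_of_bits hw (by simp) (by simp),
      count_eq_zero_of_bits hw (by simp) (by simp)]
    omega
  have hm : (w ++ parStates k).count PTok.one = w.count PTok.one := by
    simp [List.count_append, count_parStates_eq_zero]
  have hs : (w ++ parStates k).count PTok.SEP = 0 := by
    simp [List.count_append, count_parStates_eq_zero, count_eq_zero_of_bits hw]
  rcases k with _ | j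
  · exact Or.inl (Or.inl ⟨hc, hs⟩)
  rcases hk.lt_or_eq with hlt | heq
  · have hF : Flip (w ++ parStates (j + 1)) := ⟨by omega, by omega, hs⟩
    have hlast := getLast?_append_parStates_succ w j
    rcases parTok_eq_E_or_O (j + 1) with h | h <;> rw [h] at hlast
    · exact Or.inr (Or.inl (Or.inl ⟨hF, hlast⟩))
    · exact Or.inl (Or.inr (Or.inl ⟨hF, hlast⟩))
  · exact Or.inr (Or.inr ⟨by omega, hs⟩)

theorem clause_of_prefix_parityTrace {w : List PTok}
    (hw : ∀ a ∈ w, a = PTok.zero ∨ a = PTok.one) {U : List PTok}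
    (hU : U <+: parityTrace (w.count PTok.one)) (hproper : U ≠ parityTrace (w.count PTok.one)) :
    ClauseE (w ++ U) ∨ ClauseO (w ++ U) ∨ EmitSEP (w ++ U) ∨ EmitEOS (w ++ U) := by
  rcases eq_of_prefix_parityTrace hU hproper with ⟨k, hk, rfl⟩ | rfl | rfl
  · rcases clause_of_append_parStates hw hk with h | h | h
    exacts [Or.inl h, Or.inr (Or.inl h), Or.inr (Or.inr (Or.inl h))]
  · have hprev := getLast?_append_parStates_succ w (w.count PTok.one)
    rcases parTok_eq_E_or_O (w.count PTok.one + 1) with h | h <;> rw [h] at hprev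
    · exact Or.inl (Or.inr (Or.inr ⟨by simp, by simpa [← List.append_assoc] using hprev⟩))
    · exact Or.inr (Or.inl (Or.inr ⟨by simp, by simpa [← List.append_assoc] using hprev⟩))
  · refine Or.inr (Or.inr (Or.inr ⟨?_, ?_⟩))
    · rcases parTok_eq_E_or_O (w.count PTok.one + 1) with h | h <;> simp [h]
    · simp [← List.append_assoc]

/-- **Exactly one OUTPUT clause of the PARITY program is active at every step.**
For every input `w ∈ {0,1}*` with `n` ones and every proper prefix `U` of the trace
`P₁ ⋯ P_{n+1} ⟨SEP⟩ P_{n+1} ⟨EOS⟩`, exactly one of the four clauses (a) `ClauseE`,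
(b) `ClauseO`, (c) `EmitSEP`, (d) `EmitEOS` holds of `x := w ++ U`. -/
theorem parity_exactly_one_clause (w : List PTok)
    (hw : ∀ a ∈ w, a = PTok.zero ∨ a = PTok.one)
    (U : List PTok) (hU : U <+: parityTrace (w.count PTok.one))
    (hproper : U ≠ parityTrace (w.count PTok.one)) :
    (ClauseE (w ++ U) ∧ ¬ClauseO (w ++ U) ∧ ¬EmitSEP (w ++ U) ∧ ¬EmitEOS (w ++ U)) ∨
    (¬ClauseE (w ++ U) ∧ ClauseO (w ++ U) ∧ ¬EmitSEP (w ++ U) ∧ ¬EmitEOS (w ++ U)) ∨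
    (¬ClauseE (w ++ U) ∧ ¬ClauseO (w ++ U) ∧ EmitSEP (w ++ U) ∧ ¬EmitEOS (w ++ U)) ∨
    (¬ClauseE (w ++ U) ∧ ¬ClauseO (w ++ U) ∧ ¬EmitSEP (w ++ U) ∧ EmitEOS (w ++ U)) :=
  exactlyOne_clause_of_or _ (clause_of_prefix_parityTrace hw hU hproper)
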